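/- arXiv:1008.3689 — 5 statements merged into one kernel-verified Lean document; each statement's English description precedes it below -/
import Mathlib

section
/- Suppose given three ℤ-indexed families (A_n, α_n), (B_n, β_n), (C_n, γ_n) of finite-dimensional ℂ-vector spaces with endomorphisms, all vanishing for n sufficiently large, together with ℂ-linear maps u_n : A_n → B_n, v_n : B_n → C_n, δ_n : C_n → A_{n+1} forming a long exact sequence ⋯ → A_n → B_n → C_n → A_{n+1} → ⋯ and commuting with the endomorphisms (β_n∘u_n = u_n∘α_n, γ_n∘v_n = v_n∘β_n, α_{n+1}∘δ_n = δ_n∘γ_n). If any two of the three families (A,α), (B,β), (C,γ) are convergent, then so is the third, and the alternating sums of traces, which converge absolutely, satisfy ∑_{n∈ℤ}(−1)^n Tr(β_n, B_n) = ∑_{n∈ℤ}(−1)^n Tr(α_n, A_n) + ∑_{n∈ℤ}(−1)^n Tr(γ_n, C_n). -/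
open Filter

/-- A `ℤ`-indexed family of finite-dimensional complex vector spaces with endomorphisms
(vanishing in large degrees) is *convergent* if for every real `s > 0` the series over
`n ∈ ℤ` of `∑_λ |λ|^s` converges, `λ` running over the eigenvalues (roots of the
characteristic polynomial, with multiplicity) of the endomorphism in degree `n`. -/
def ConvergentFamily (V : ℤ → Type*) [∀ n, AddCommGroup (V n)] [∀ n, Module ℂ (V n)]
    [∀ n, FiniteDimensional ℂ (V n)] (φ : ∀ n, V n →ₗ[ℂ] V n) : Prop :=
  ∀ s : ℝ, 0 < s →
    Summable fun n : ℤ =>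
      (((LinearMap.charpoly (φ n)).roots).map fun z => ‖z‖ ^ s).sum

/-!
Write `a n`, `b n`, `c n` for the multisets of eigenvalues of `α n`, `β n`, `γ n` restricted to
`ker (u n)`, `ker (v n)`, `ker (δ n)`. Since `A n ⧸ ker (u n) ≃ range (u n) = ker (v n)`
compatibly with the endomorphisms, and the characteristic polynomial is multiplicative along an
invariant subspace, the eigenvalues of `α n`, `β n`, `γ n` are `a n + b n`, `b n + c n` and
`c n + a (n + 1)`. A family is convergent iff both of its pieces are, which gives the
two-out-of-three property, and in the alternating trace sums the contributions of `a` to `A`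
and to `C` cancel after the shift `n ↦ n + 1`.
-/

namespace LinearMap

variable {K M N P : Type*} [Field K] [AddCommGroup M] [Module K M] [AddCommGroup N] [Module K N]
  [AddCommGroup P] [Module K P]

theorem ker_le_comap_ker_of_comp_eq {g : M →ₗ[K] N} {e : M →ₗ[K] M} {f : N →ₗ[K] N}
    (h : f ∘ₗ g = g ∘ₗ e) : ker g ≤ (ker g).comap e := fun x hx => by
  simp_all [← comp_apply, ← h]

variable [FiniteDimensional K M] [FiniteDimensional K N]

theorem charpoly_eq_charpoly_restrict_mul_charpoly_mapQ [Infinite K] (e : M →ₗ[K] M)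
    (W : Submodule K M) (he : W ≤ W.comap e) :
    e.charpoly = (e.restrict he).charpoly * (W.mapQ W e he).charpoly := by
  refine Polynomial.funext fun t => ?_
  have he' : W ≤ W.comap (algebraMap K _ t - e) := fun x hx =>
    W.sub_mem (W.smul_mem t hx) (he hx)
  rw [Polynomial.eval_mul, eval_charpoly, eval_charpoly, eval_charpoly,
    det_eq_det_mul_det W _ he']
  congr 2
  ext x
  simp

theorem charpoly_eq_mul_of_exact [Infinite K] {g : M →ₗ[K] N} {h : N →ₗ[K] P}
    (hgh : Function.Exact g h) {e : M →ₗ[K] M} {f : N →ₗ[K] N} (hg : f ∘ₗ g = g ∘ₗ e)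
    (hf : ker h ≤ (ker h).comap f) :
    e.charpoly = (e.restrict (ker_le_comap_ker_of_comp_eq hg)).charpoly *
      (f.restrict hf).charpoly := by
  rw [charpoly_eq_charpoly_restrict_mul_charpoly_mapQ e _ (ker_le_comap_ker_of_comp_eq hg)]
  congr 1
  let φ : (M ⧸ ker g) ≃ₗ[K] ker h :=
    g.quotKerEquivRange.trans (LinearEquiv.ofEq _ _ (exact_iff.mp hgh).symm)
  rw [← φ.charpoly_conj]
  congr 1
  rw [LinearEquiv.conj_apply, LinearEquiv.comp_toLinearMap_symm_eq]
  ext m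
  simpa [φ] using (LinearMap.congr_fun hg m).symm

theorem roots_charpoly_eq_add_of_exact [Infinite K] {g : M →ₗ[K] N} {h : N →ₗ[K] P}
    (hgh : Function.Exact g h) {e : M →ₗ[K] M} {f : N →ₗ[K] N} (hg : f ∘ₗ g = g ∘ₗ e)
    (hf : ker h ≤ (ker h).comap f) :
    e.charpoly.roots = (e.restrict (ker_le_comap_ker_of_comp_eq hg)).charpoly.roots +
      (f.restrict hf).charpoly.roots := by
  rw [charpoly_eq_mul_of_exact hgh hg hf,
    Polynomial.roots_mul ((charpoly_monic _).mul (charpoly_monic _)).ne_zero]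

theorem trace_eq_sum_roots_charpoly [IsAlgClosed K] (f : M →ₗ[K] M) :
    trace K M f = f.charpoly.roots.sum :=
  Module.End.trace_eq_sum_roots_charpoly_of_splits (IsAlgClosed.splits _)

end LinearMap

theorem summable_add_iff_of_nonneg {ι : Type*} {f g : ι → ℝ} (hf : 0 ≤ f) (hg : 0 ≤ g) :
    (Summable fun i => f i + g i) ↔ Summable f ∧ Summable g :=
  ⟨fun h => ⟨h.of_nonneg_of_le hf fun i => le_add_of_nonneg_right (hg i),
      h.of_nonneg_of_le hg fun i => le_add_of_nonneg_left (hf i)⟩,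
    fun h => h.1.add h.2⟩

theorem tsum_zpow_neg_one_mul_add_one {R : Type*} [DivisionRing R] [TopologicalSpace R]
    [IsTopologicalAddGroup R] [T2Space R] (f : ℤ → R) :
    ∑' n : ℤ, (-1 : R) ^ n * f (n + 1) = -∑' n : ℤ, (-1 : R) ^ n * f n := by
  rw [← (Equiv.addRight (1 : ℤ)).tsum_eq (fun n => (-1 : R) ^ n * f n), ← tsum_neg]
  simp [zpow_add_one₀]

/-- `ConvergentFamily V φ` is definitionally
`ConvergentMultisets fun n => (φ n).charpoly.roots`. -/
def ConvergentMultisets (R : ℤ → Multiset ℂ) : Prop :=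
  ∀ s : ℝ, 0 < s → Summable fun n => ((R n).map fun z => ‖z‖ ^ s).sum

namespace ConvergentMultisets

variable {R S : ℤ → Multiset ℂ}

theorem add_iff : ConvergentMultisets (fun n => R n + S n) ↔
    ConvergentMultisets R ∧ ConvergentMultisets S := by
  have hnonneg (T : ℤ → Multiset ℂ) (s : ℝ) : 0 ≤ fun n => ((T n).map fun z => ‖z‖ ^ s).sum :=
    fun n => Multiset.sum_nonneg fun x hx => by
      obtain ⟨z, -, rfl⟩ := Multiset.mem_map.mp hx
      positivity
  simp only [ConvergentMultisets, Multiset.map_add, Multiset.sum_add,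
    summable_add_iff_of_nonneg (hnonneg R _) (hnonneg S _)]
  exact ⟨fun h => ⟨fun s hs => (h s hs).1, fun s hs => (h s hs).2⟩,
    fun h s hs => ⟨h.1 s hs, h.2 s hs⟩⟩

theorem comp_add_one_iff : ConvergentMultisets (fun n => R (n + 1)) ↔ ConvergentMultisets R :=
  forall₂_congr fun s _ =>
    (Equiv.addRight (1 : ℤ)).summable_iff (f := fun n => ((R n).map fun z => ‖z‖ ^ s).sum)

theorem summable_norm_zpow_mul_sum (h : ConvergentMultisets R) :
    Summable fun n : ℤ => ‖(-1 : ℂ) ^ n * (R n).sum‖ := by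
  refine (h 1 one_pos).of_nonneg_of_le (fun n => norm_nonneg _) fun n => ?_
  simpa using norm_multiset_sum_le (R n)

theorem summable_zpow_mul_sum (h : ConvergentMultisets R) :
    Summable fun n : ℤ => (-1 : ℂ) ^ n * (R n).sum :=
  h.summable_norm_zpow_mul_sum.of_norm

end ConvergentMultisets

section LongExact

variable {RA RB RC a b c : ℤ → Multiset ℂ}

theorem convergentMultisets_of_two_of_three
    (hA : ∀ n, RA n = a n + b n) (hB : ∀ n, RB n = b n + c n) (hC : ∀ n, RC n = c n + a (n + 1))
    (htwo : (ConvergentMultisets RA ∧ ConvergentMultisets RB) ∨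
      (ConvergentMultisets RA ∧ ConvergentMultisets RC) ∨
      (ConvergentMultisets RB ∧ ConvergentMultisets RC)) :
    ConvergentMultisets RA ∧ ConvergentMultisets RB ∧ ConvergentMultisets RC := by
  obtain rfl := funext hA
  obtain rfl := funext hB
  obtain rfl := funext hC
  simp only [ConvergentMultisets.add_iff, ConvergentMultisets.comp_add_one_iff] at htwo ⊢
  tauto

theorem tsum_zpow_mul_sum_eq_add
    (hA : ∀ n, RA n = a n + b n) (hB : ∀ n, RB n = b n + c n) (hC : ∀ n, RC n = c n + a (n + 1))
    (hRA : ConvergentMultisets RA) (hRC : ConvergentMultisets RC) :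
    ∑' n : ℤ, (-1 : ℂ) ^ n * (RB n).sum =
      ∑' n : ℤ, (-1 : ℂ) ^ n * (RA n).sum + ∑' n : ℤ, (-1 : ℂ) ^ n * (RC n).sum := by
  obtain rfl := funext hA
  obtain rfl := funext hB
  obtain rfl := funext hC
  obtain ⟨ha, hb⟩ := ConvergentMultisets.add_iff.mp hRA
  obtain ⟨hc, ha'⟩ := ConvergentMultisets.add_iff.mp hRC
  simp only [Multiset.sum_add, mul_add]
  rw [hb.summable_zpow_mul_sum.tsum_add hc.summable_zpow_mul_sum,
    ha.summable_zpow_mul_sum.tsum_add hb.summable_zpow_mul_sum,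
    hc.summable_zpow_mul_sum.tsum_add ha'.summable_zpow_mul_sum,
    tsum_zpow_neg_one_mul_add_one fun n => (a n).sum]
  ring

end LongExact

theorem trace_add_of_longExact_general
    (A B C : ℤ → Type*) [∀ n, AddCommGroup (A n)] [∀ n, Module ℂ (A n)]
    [∀ n, FiniteDimensional ℂ (A n)] [∀ n, AddCommGroup (B n)] [∀ n, Module ℂ (B n)]
    [∀ n, FiniteDimensional ℂ (B n)] [∀ n, AddCommGroup (C n)] [∀ n, Module ℂ (C n)]
    [∀ n, FiniteDimensional ℂ (C n)]
    (α : ∀ n, A n →ₗ[ℂ] A n) (β : ∀ n, B n →ₗ[ℂ] B n) (γ : ∀ n, C n →ₗ[ℂ] C n)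
    (u : ∀ n, A n →ₗ[ℂ] B n) (v : ∀ n, B n →ₗ[ℂ] C n) (δ : ∀ n, C n →ₗ[ℂ] A (n + 1))
    (huv : ∀ n, Function.Exact (u n) (v n))
    (hvδ : ∀ n, Function.Exact (v n) (δ n))
    (hδu : ∀ n, Function.Exact (δ n) (u (n + 1)))
    (hu : ∀ n, (β n) ∘ₗ (u n) = (u n) ∘ₗ (α n))
    (hv : ∀ n, (γ n) ∘ₗ (v n) = (v n) ∘ₗ (β n))
    (hδ : ∀ n, (α (n + 1)) ∘ₗ (δ n) = (δ n) ∘ₗ (γ n))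
    (htwo : (ConvergentFamily A α ∧ ConvergentFamily B β) ∨
      (ConvergentFamily A α ∧ ConvergentFamily C γ) ∨
      (ConvergentFamily B β ∧ ConvergentFamily C γ)) :
    ConvergentFamily A α ∧ ConvergentFamily B β ∧ ConvergentFamily C γ ∧
    Summable (fun n : ℤ => ‖((-1 : ℂ) ^ n) * LinearMap.trace ℂ (A n) (α n)‖) ∧
    Summable (fun n : ℤ => ‖((-1 : ℂ) ^ n) * LinearMap.trace ℂ (B n) (β n)‖) ∧
    Summable (fun n : ℤ => ‖((-1 : ℂ) ^ n) * LinearMap.trace ℂ (C n) (γ n)‖) ∧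
    (∑' n : ℤ, ((-1 : ℂ) ^ n) * LinearMap.trace ℂ (B n) (β n)) =
      (∑' n : ℤ, ((-1 : ℂ) ^ n) * LinearMap.trace ℂ (A n) (α n)) +
      (∑' n : ℤ, ((-1 : ℂ) ^ n) * LinearMap.trace ℂ (C n) (γ n)) := by
  have rootsA n := LinearMap.roots_charpoly_eq_add_of_exact (huv n) (hu n)
    (LinearMap.ker_le_comap_ker_of_comp_eq (hv n))
  have rootsB n := LinearMap.roots_charpoly_eq_add_of_exact (hvδ n) (hv n)
    (LinearMap.ker_le_comap_ker_of_comp_eq (hδ n))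
  have rootsC n := LinearMap.roots_charpoly_eq_add_of_exact (hδu n) (hδ n)
    (LinearMap.ker_le_comap_ker_of_comp_eq (hu (n + 1)))
  obtain ⟨hA, hB, hC⟩ := convergentMultisets_of_two_of_three rootsA rootsB rootsC htwo
  simp only [LinearMap.trace_eq_sum_roots_charpoly]
  exact ⟨hA, hB, hC, hA.summable_norm_zpow_mul_sum, hB.summable_norm_zpow_mul_sum,
    hC.summable_norm_zpow_mul_sum, tsum_zpow_mul_sum_eq_add rootsA rootsB rootsC hA hC⟩

/-- Long exact sequence of `ℤ`-indexed families of finite-dimensional complex vector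
spaces with commuting endomorphisms, all vanishing in sufficiently large degrees:
if two of the three families are convergent then so is the third, the alternating sums
of traces converge absolutely, and
`∑ (-1)^n Tr(β_n) = ∑ (-1)^n Tr(α_n) + ∑ (-1)^n Tr(γ_n)`. -/
theorem trace_add_of_longExact
    (A B C : ℤ → Type*) [∀ n, AddCommGroup (A n)] [∀ n, Module ℂ (A n)]
    [∀ n, FiniteDimensional ℂ (A n)] [∀ n, AddCommGroup (B n)] [∀ n, Module ℂ (B n)]
    [∀ n, FiniteDimensional ℂ (B n)] [∀ n, AddCommGroup (C n)] [∀ n, Module ℂ (C n)]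
    [∀ n, FiniteDimensional ℂ (C n)]
    (α : ∀ n, A n →ₗ[ℂ] A n) (β : ∀ n, B n →ₗ[ℂ] B n) (γ : ∀ n, C n →ₗ[ℂ] C n)
    (N : ℤ)
    (hvan : ∀ n : ℤ, N ≤ n → Subsingleton (A n) ∧ Subsingleton (B n) ∧ Subsingleton (C n))
    (u : ∀ n, A n →ₗ[ℂ] B n) (v : ∀ n, B n →ₗ[ℂ] C n) (δ : ∀ n, C n →ₗ[ℂ] A (n + 1))
    (huv : ∀ n, Function.Exact (u n) (v n))
    (hvδ : ∀ n, Function.Exact (v n) (δ n))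
    (hδu : ∀ n, Function.Exact (δ n) (u (n + 1)))
    (hu : ∀ n, (β n) ∘ₗ (u n) = (u n) ∘ₗ (α n))
    (hv : ∀ n, (γ n) ∘ₗ (v n) = (v n) ∘ₗ (β n))
    (hδ : ∀ n, (α (n + 1)) ∘ₗ (δ n) = (δ n) ∘ₗ (γ n))
    (htwo : (ConvergentFamily A α ∧ ConvergentFamily B β) ∨
      (ConvergentFamily A α ∧ ConvergentFamily C γ) ∨
      (ConvergentFamily B β ∧ ConvergentFamily C γ)) :
    ConvergentFamily A α ∧ ConvergentFamily B β ∧ ConvergentFamily C γ ∧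
    Summable (fun n : ℤ => ‖((-1 : ℂ) ^ n) * LinearMap.trace ℂ (A n) (α n)‖) ∧
    Summable (fun n : ℤ => ‖((-1 : ℂ) ^ n) * LinearMap.trace ℂ (B n) (β n)‖) ∧
    Summable (fun n : ℤ => ‖((-1 : ℂ) ^ n) * LinearMap.trace ℂ (C n) (γ n)‖) ∧
    (∑' n : ℤ, ((-1 : ℂ) ^ n) * LinearMap.trace ℂ (B n) (β n)) =
      (∑' n : ℤ, ((-1 : ℂ) ^ n) * LinearMap.trace ℂ (A n) (α n)) +
      (∑' n : ℤ, ((-1 : ℂ) ^ n) * LinearMap.trace ℂ (C n) (γ n)) :=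
  trace_add_of_longExact_general A B C α β γ u v δ huv hvδ hδu hu hv hδ htwo
end

section
/- Let k be a field, V a finite-dimensional k-vector space, φ : V → V a k-linear endomorphism, and d ≥ 1 an integer. Let B = V^{⊕d} (d-tuples of vectors) and define the k-linear endomorphism F : B → B by F(x_0, x_1, …, x_{d−1}) = (φ(x_{d−1}), x_0, x_1, …, x_{d−2}). Then the characteristic polynomial of F on B equals the characteristic polynomial of φ on V evaluated at X^d, i.e. det(X·id_B − F) = det(X^d·id_V − φ); equivalently det(id_B − X·F) = det(id_V − X^d·φ) in k[X]. -/
/-!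
Write the matrix of `F` as `S + P`, with `S` the block shift and `P` the corner block `φ`.
Over any commutative ring, `1 - t (S + P) = (1 - t S) (1 - A B)` where `A` is the block column
`(t φ, t² φ, …, t^d φ)` and `B` projects onto the last block. The factor `1 - t S` is
unitriangular, and the Weinstein–Aronszajn identity `det (1 - A B) = det (1 - B A)` gives
`det (1 - t F) = det (1 - t^d φ)`. Taking `t = X⁻¹` among Laurent polynomials turns this into
the identity of characteristic polynomials.
-/

open Polynomial
open scoped Kronecker

namespace Matrix

variable {R : Type*} [CommRing R] {ι : Type*} [Fintype ι] [DecidableEq ι]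

def lowerShift (n : ℕ) : Matrix (Fin n) (Fin n) R :=
  of fun i j => if (i : ℕ) = j + 1 then 1 else 0

def blockCyclic (M : Matrix ι ι R) (m : ℕ) : Matrix (Fin (m + 1) × ι) (Fin (m + 1) × ι) R :=
  lowerShift (m + 1) ⊗ₖ 1 + single 0 (Fin.last m) 1 ⊗ₖ M

theorem det_one_sub_smul_lowerShift (n : ℕ) (t : R) :
    det (1 - t • lowerShift n : Matrix (Fin n) (Fin n) R) = 1 := by
  rw [det_of_isLowerTriangular]
  · simp [lowerShift]
  · intro i j hij
    have hij : (i : ℕ) < j := hij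
    have : (i : ℕ) ≠ j + 1 := by omega
    simp [lowerShift, this, one_apply_ne (Fin.ne_of_lt hij)]

theorem one_sub_smul_lowerShift_mul_pow (m : ℕ) (t : R) :
    (1 - t • lowerShift (m + 1) : Matrix (Fin (m + 1)) (Fin (m + 1)) R) *
      of (fun (i : Fin (m + 1)) (_ : Unit) => t ^ ((i : ℕ) + 1)) =
      of fun i _ => if i = 0 then t else 0 := by
  ext i u
  rw [Matrix.sub_mul, Matrix.one_mul, Matrix.smul_mul]
  induction i using Fin.cases with
  | zero => simp [lowerShift, mul_apply]
  | succ l =>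
    simp only [lowerShift, sub_apply, smul_apply, of_apply, mul_apply, Fin.val_succ,
      Nat.add_right_cancel_iff, ite_mul, one_mul, zero_mul, smul_eq_mul, Fin.succ_ne_zero,
      ↓reduceIte]
    rw [Finset.sum_eq_single l.castSucc (fun j _ hj => if_neg fun h => hj (Fin.ext h.symm))
      (by simp)]
    simp [pow_succ']

theorem det_one_sub_smul_blockCyclic (M : Matrix ι ι R) (m : ℕ) (t : R) :
    det (1 - t • blockCyclic M m) = det (1 - t ^ (m + 1) • M) := by
  let a : Matrix (Fin (m + 1)) Unit R := of fun i _ => t ^ ((i : ℕ) + 1)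
  let b : Matrix Unit (Fin (m + 1)) R := of fun _ j => if j = Fin.last m then 1 else 0
  have hshift : (1 - t • lowerShift (m + 1) : Matrix (Fin (m + 1)) (Fin (m + 1)) R) * a * b =
      t • single 0 (Fin.last m) 1 := by
    rw [one_sub_smul_lowerShift_mul_pow m t]
    ext i j
    by_cases hj : j = Fin.last m <;> simp [b, mul_apply, single_apply, hj, eq_comm]
  have hba : b * a = t ^ (m + 1) • 1 := by
    ext
    simp [b, a, mul_apply]
  have hL : (1 - t • lowerShift (m + 1)) ⊗ₖ (1 : Matrix ι ι R) =
      1 - t • (lowerShift (m + 1) ⊗ₖ 1) := by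
    ext ⟨i, r⟩ ⟨j, s⟩
    by_cases hrs : r = s <;> simp [one_apply, hrs]
  have hfactor : 1 - t • blockCyclic M m =
      (1 - t • lowerShift (m + 1)) ⊗ₖ 1 * (1 - (a ⊗ₖ M) * (b ⊗ₖ (1 : Matrix ι ι R))) := by
    rw [mul_sub, mul_one, ← Matrix.mul_assoc, ← mul_kronecker_mul, ← mul_kronecker_mul,
      hshift, one_mul, mul_one, hL, blockCyclic, smul_kronecker, smul_add]
    abel
  have hunit : (1 : Matrix (Unit × ι) (Unit × ι) R) - (t ^ (m + 1) • 1 : Matrix Unit Unit R) ⊗ₖ M =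
      1 ⊗ₖ (1 - t ^ (m + 1) • M) := by
    ext ⟨i, r⟩ ⟨j, s⟩
    simp [mul_sub, one_apply]
  calc det (1 - t • blockCyclic M m)
      = det (1 - (a ⊗ₖ M) * (b ⊗ₖ (1 : Matrix ι ι R))) := by
        rw [hfactor, det_mul, det_kronecker, det_one_sub_smul_lowerShift]; simp
    _ = det (1 - (b ⊗ₖ (1 : Matrix ι ι R)) * (a ⊗ₖ M)) := det_one_sub_mul_comm _ _
    _ = det (1 - t ^ (m + 1) • M) := by
        rw [← mul_kronecker_mul, hba, one_mul, hunit, det_kronecker]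
        simp

omit [Fintype ι] in
theorem blockCyclic_map {S : Type*} [CommRing S] (f : R →+* S) (M : Matrix ι ι R) (m : ℕ) :
    (blockCyclic M m).map f = blockCyclic (M.map f) m := by
  ext ⟨i, r⟩ ⟨j, s⟩
  simp [blockCyclic, lowerShift, one_apply, single_apply, apply_ite f]

theorem det_smul_one_sub_blockCyclic (M : Matrix ι ι R) (m : ℕ) {u : R} (hu : IsUnit u) :
    det (u • 1 - blockCyclic M m) = det (u ^ (m + 1) • 1 - M) := by
  obtain ⟨v, hv⟩ := hu.exists_right_inv
  calc det (u • 1 - blockCyclic M m)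
      = det (u • (1 - v • blockCyclic M m)) := by rw [smul_sub, smul_smul, hv, one_smul]
    _ = (u ^ (m + 1)) ^ Fintype.card ι * det (1 - v ^ (m + 1) • M) := by
      rw [det_smul, det_one_sub_smul_blockCyclic, Fintype.card_prod, Fintype.card_fin, pow_mul]
    _ = det (u ^ (m + 1) • 1 - M) := by
      rw [← det_smul, smul_sub, smul_smul, ← mul_pow, hv, one_pow, one_smul]

theorem ringHom_apply_charpoly {S : Type*} [CommRing S] (f : R[X] →+* S) (M : Matrix ι ι R) :
    f M.charpoly = det (f X • 1 - M.map (f.comp C)) := by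
  rw [charpoly, RingHom.map_det, charmatrix]
  congr 1
  ext i j
  by_cases h : i = j <;> simp [h]

theorem charpoly_blockCyclic (M : Matrix ι ι R) (m : ℕ) :
    (blockCyclic M m).charpoly = M.charpoly.comp (X ^ (m + 1)) := by
  apply toLaurent_injective
  have hcomp : toLaurent (M.charpoly.comp (X ^ (m + 1))) =
      (toLaurent.comp (compRingHom (X ^ (m + 1)))) M.charpoly := rfl
  rw [hcomp, ringHom_apply_charpoly, ringHom_apply_charpoly, blockCyclic_map, toLaurent_X,
    det_smul_one_sub_blockCyclic _ _ (LaurentPolynomial.isUnit_T 1)]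
  congr 3
  · simp [LaurentPolynomial.T_pow]
  · ext; simp

end Matrix

open Matrix

theorem LinearMap.toMatrix_eq_blockCyclic {R V ι : Type*} [CommRing R] [AddCommGroup V]
    [Module R V] [Fintype ι] [DecidableEq ι] (bV : Module.Basis ι R V) (φ : V →ₗ[R] V) {m : ℕ}
    (F : (Fin (m + 1) → V) →ₗ[R] (Fin (m + 1) → V))
    (hF₀ : ∀ x, F x 0 = φ (x (Fin.last m))) (hF : ∀ x (i : Fin m), F x i.succ = x i.castSucc) :
    toMatrix ((Pi.basis fun _ => bV).reindex (Equiv.sigmaEquivProd _ _))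
      ((Pi.basis fun _ => bV).reindex (Equiv.sigmaEquivProd _ _)) F =
      blockCyclic (toMatrix bV bV φ) m := by
  ext ⟨i, r⟩ ⟨j, s⟩
  rw [toMatrix_apply, Module.Basis.reindex_apply, Module.Basis.repr_reindex_apply]
  simp only [Equiv.sigmaEquivProd_symm_apply, Pi.basis_apply, Pi.basis_repr]
  induction i using Fin.cases with
  | zero =>
    by_cases hj : j = Fin.last m
    · subst hj
      simp [hF₀, blockCyclic, lowerShift, toMatrix_apply]
    · simp [hF₀, blockCyclic, lowerShift, Ne.symm hj]
  | succ l =>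
    by_cases hj : j = l.castSucc
    · subst hj
      simp [hF, blockCyclic, lowerShift, one_apply, Finsupp.single_apply, eq_comm]
    · have hjl : (l : ℕ) ≠ j := fun h => hj (Fin.ext h.symm)
      simp [hF, blockCyclic, lowerShift, Pi.single_eq_of_ne' hj, hjl, (Fin.succ_ne_zero l).symm]

theorem LinearMap.charpoly_eq_comp_of_cyclic {R V : Type*} [CommRing R] [AddCommGroup V]
    [Module R V] [Module.Free R V] [Module.Finite R V] (φ : V →ₗ[R] V) {m : ℕ}
    (F : (Fin (m + 1) → V) →ₗ[R] (Fin (m + 1) → V))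
    (hF₀ : ∀ x, F x 0 = φ (x (Fin.last m))) (hF : ∀ x (i : Fin m), F x i.succ = x i.castSucc) :
    F.charpoly = φ.charpoly.comp (X ^ (m + 1)) := by
  let bV := Module.Free.chooseBasis R V
  rw [← charpoly_toMatrix F ((Pi.basis fun _ => bV).reindex (Equiv.sigmaEquivProd _ _)),
    toMatrix_eq_blockCyclic bV φ F hF₀ hF, charpoly_blockCyclic, charpoly_toMatrix]

/-- Let `φ` be an endomorphism of a finite-dimensional `k`-vector space `V` and `d ≥ 1`.
On `B = V^{⊕d}` define `F (x_0, …, x_{d-1}) = (φ (x_{d-1}), x_0, …, x_{d-2})`.  Then the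
characteristic polynomial of `F` is the characteristic polynomial of `φ` evaluated at
`X^d`, i.e. `det (X·id_B - F) = det (X^d·id_V - φ)`. -/
theorem charpoly_cyclic_induced {k : Type*} [Field k] (V : Type*) [AddCommGroup V]
    [Module k V] [FiniteDimensional k V] (φ : V →ₗ[k] V) (d : ℕ) (hd : 0 < d)
    (F : (Fin d → V) →ₗ[k] (Fin d → V))
    (hF : ∀ (x : Fin d → V) (i : Fin d),
      F x i = if i.1 = 0 then φ (x ⟨d - 1, Nat.sub_lt hd Nat.one_pos⟩)
        else x ⟨i.1 - 1, Nat.lt_of_le_of_lt (Nat.sub_le i.1 1) i.isLt⟩) :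
    LinearMap.charpoly F = (LinearMap.charpoly φ).comp (Polynomial.X ^ d) := by
  obtain ⟨m, rfl⟩ : ∃ m, d = m + 1 := ⟨d - 1, by omega⟩
  exact LinearMap.charpoly_eq_comp_of_cyclic φ F (fun x => by rw [hF]; rfl)
    (fun x i => by rw [hF]; rfl)
end

section
/- Let k be a field, V a finite-dimensional k-vector space, φ : V → V a k-linear endomorphism, and d ≥ 1 an integer. Let B = V^{⊕d} and define F : B → B by F(x_0, x_1, …, x_{d−1}) = (φ(x_{d−1}), x_0, x_1, …, x_{d−2}). Then for every integer v ≥ 1: if d divides v then Tr(F^v, B) = d · Tr(φ^{v/d}, V), and if d does not divide v then Tr(F^v, B) = 0. -/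
/-! `F ^ d` acts as `φ` on every coordinate, while for `0 < r < d` the map `F ^ r` moves every
coordinate to a different one. Writing `v = d q + r` and computing the trace of
`F ^ v = F ^ (d q) * F ^ r` as the sum of the traces of its diagonal blocks gives `d Tr(φ ^ q)`
when `r = 0` and `0` otherwise. -/

theorem LinearMap.trace_eq_sum_trace_proj_comp_comp_single {R ι M : Type*} [CommRing R]
    [Fintype ι] [DecidableEq ι] [AddCommGroup M] [Module R M] [Module.Free R M]
    [Module.Finite R M] (T : (ι → M) →ₗ[R] ι → M) :
    trace R (ι → M) T = ∑ i, trace R M (proj i ∘ₗ T ∘ₗ single R (fun _ => M) i) := by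
  conv_lhs => rw [← (lsum R (fun _ : ι => M) R).apply_symm_apply T]
  simp only [lsum_apply, lsum_symm_apply, map_sum]
  exact Finset.sum_congr rfl fun i _ => trace_comp_comm' _ _

namespace CyclicInduced

section Semiring

variable {k V : Type*} [Semiring k] [AddCommMonoid V] [Module k V] {φ : V →ₗ[k] V} {d : ℕ}
  (hd : 0 < d) {F : (Fin d → V) →ₗ[k] (Fin d → V)}
  (hF : ∀ (x : Fin d → V) (i : Fin d),
    F x i = if i.1 = 0 then φ (x ⟨d - 1, Nat.sub_lt hd Nat.one_pos⟩)
      else x ⟨i.1 - 1, Nat.lt_of_le_of_lt (Nat.sub_le i.1 1) i.isLt⟩)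
include hF

theorem pow_apply_of_val_add_eq (x : Fin d → V) {t : ℕ} {i j : Fin d} (h : j.1 + t = i.1) :
    (F ^ t) x i = x j := by
  induction t generalizing i with
  | zero => rw [pow_zero, Module.End.one_apply, Fin.ext (h.symm : i.1 = j.1)]
  | succ t ih =>
    rw [pow_succ', Module.End.mul_apply, hF, if_neg (by omega)]
    exact ih (by dsimp; omega)

theorem pow_apply_of_val_add_eq_add (x : Fin d → V) {t : ℕ} {i j : Fin d}
    (h : j.1 + t = i.1 + d) : (F ^ t) x i = φ (x j) := by
  induction t generalizing i with
  | zero => omega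
  | succ t ih =>
    rw [pow_succ', Module.End.mul_apply, hF]
    split_ifs with hi
    · exact congrArg φ (pow_apply_of_val_add_eq hd hF x (by dsimp; omega))
    · exact ih (by dsimp; omega)

theorem pow_mul_apply (q : ℕ) (x : Fin d → V) (i : Fin d) :
    (F ^ (d * q)) x i = (φ ^ q) (x i) := by
  induction q generalizing x with
  | zero => simp
  | succ q ih =>
    rw [Nat.mul_succ, pow_add, Module.End.mul_apply, ih,
      pow_apply_of_val_add_eq_add hd hF x rfl, pow_succ, Module.End.mul_apply]

theorem pow_apply_single_self {r : ℕ} (hr₀ : 0 < r) (hr : r < d) (i : Fin d) (y : V) :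
    (F ^ r) (Pi.single i y) i = 0 := by
  by_cases hri : r ≤ i.1
  · rw [pow_apply_of_val_add_eq hd hF _ (j := ⟨i.1 - r, by omega⟩) (by dsimp; omega),
      Pi.single_eq_of_ne (by simp [Fin.ext_iff]; omega)]
  · rw [pow_apply_of_val_add_eq_add hd hF _ (j := ⟨i.1 + d - r, by omega⟩) (by dsimp; omega),
      Pi.single_eq_of_ne (by simp [Fin.ext_iff]; omega), map_zero]

end Semiring

section Trace

variable {k V : Type*} [CommRing k] [AddCommGroup V] [Module k V] [Module.Free k V]
  [Module.Finite k V] {φ : V →ₗ[k] V} {d : ℕ} (hd : 0 < d) {F : (Fin d → V) →ₗ[k] (Fin d → V)}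
  (hF : ∀ (x : Fin d → V) (i : Fin d),
    F x i = if i.1 = 0 then φ (x ⟨d - 1, Nat.sub_lt hd Nat.one_pos⟩)
      else x ⟨i.1 - 1, Nat.lt_of_le_of_lt (Nat.sub_le i.1 1) i.isLt⟩)
include hF

theorem trace_pow_mul (q : ℕ) :
    LinearMap.trace k _ (F ^ (d * q)) = d * LinearMap.trace k V (φ ^ q) := by
  have hblock : ∀ i : Fin d,
      LinearMap.proj i ∘ₗ (F ^ (d * q)) ∘ₗ LinearMap.single k (fun _ => V) i = φ ^ q :=
    fun i => LinearMap.ext fun y => by simp [pow_mul_apply hd hF]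
  simp [LinearMap.trace_eq_sum_trace_proj_comp_comp_single, hblock]

theorem trace_pow_mul_add (q : ℕ) {r : ℕ} (hr₀ : 0 < r) (hr : r < d) :
    LinearMap.trace k _ (F ^ (d * q + r)) = 0 := by
  have hblock : ∀ i : Fin d,
      LinearMap.proj i ∘ₗ (F ^ (d * q + r)) ∘ₗ LinearMap.single k (fun _ => V) i = 0 :=
    fun i => LinearMap.ext fun y => by
      simp [pow_add, pow_mul_apply hd hF, pow_apply_single_self hd hF hr₀ hr]
  simp [LinearMap.trace_eq_sum_trace_proj_comp_comp_single, hblock]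

end Trace

end CyclicInduced

/-- Let `φ` be an endomorphism of a finite-dimensional `k`-vector space `V` and `d ≥ 1`.
On `B = V^{⊕d}` define `F (x_0, …, x_{d-1}) = (φ (x_{d-1}), x_0, …, x_{d-2})`.  Then for
every `v ≥ 1`: if `d ∣ v` then `Tr(F^v) = d · Tr(φ^{v/d})`, and otherwise `Tr(F^v) = 0`. -/
theorem trace_pow_cyclic_induced {k : Type*} [Field k] (V : Type*) [AddCommGroup V]
    [Module k V] [FiniteDimensional k V] (φ : V →ₗ[k] V) (d : ℕ) (hd : 0 < d)
    (F : (Fin d → V) →ₗ[k] (Fin d → V))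
    (hF : ∀ (x : Fin d → V) (i : Fin d),
      F x i = if i.1 = 0 then φ (x ⟨d - 1, Nat.sub_lt hd Nat.one_pos⟩)
        else x ⟨i.1 - 1, Nat.lt_of_le_of_lt (Nat.sub_le i.1 1) i.isLt⟩) :
    ∀ v : ℕ, 1 ≤ v →
      (d ∣ v →
        LinearMap.trace k (Fin d → V) (F ^ v) = (d : k) * LinearMap.trace k V (φ ^ (v / d))) ∧
      (¬ d ∣ v → LinearMap.trace k (Fin d → V) (F ^ v) = 0) := by
  intro v _
  refine ⟨fun ⟨q, hq⟩ => ?_, fun hv => ?_⟩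
  · rw [hq, Nat.mul_div_cancel_left q hd]
    exact CyclicInduced.trace_pow_mul hd hF q
  · rw [← Nat.div_add_mod v d]
    exact CyclicInduced.trace_pow_mul_add hd hF _
      (Nat.pos_of_ne_zero (mt Nat.dvd_of_mod_eq_zero hv)) (Nat.mod_lt v hd)
end

section
/- Let N₀ be an integer, and for each integer n ≤ N₀ let α_{n,1}, …, α_{n,m_n} be finitely many complex numbers (m_n ≥ 0, with m_n = 0 allowed). Assume that for every real s > 0 the series ∑_{n ≤ N₀} ∑_{j=1}^{m_n} |α_{n,j}|^s converges. Then: (1) for each integer v ≥ 1 the series c_v := ∑_{n ≤ N₀} (−1)^n ∑_{j=1}^{m_n} α_{n,j}^v converges absolutely; and (2) setting P_n(t) := ∏_{j=1}^{m_n} (1 − α_{n,j} t) ∈ ℂ[t], the infinite product ∏_{n ≤ N₀} P_n(t)^{(−1)^{n+1}} converges term by term in ℂ[[t]] to the formal power series exp(∑_{v≥1} c_v t^v / v). -/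
/-!
With `p_{n,v} = ∑_j α_{n,j}^v`, the identity `log (1 - a t) = -∑_{v ≥ 1} a^v t^v / v` gives
`P_n(t)^{(-1)^{n+1}} = exp (∑_{v ≥ 1} (-1)^n p_{n,v} t^v / v)`. The formal exponential turns sums of
series without constant term into products, since `exp (g + h)` and `exp g * exp h` solve the same
equation `F' = (g + h)' F` with `F(0) = 1`. So the `N`-th partial product is the exponential of
`∑_{v ≥ 1} c_{N,v} t^v / v` with `c_{N,v}` the partial sums of the absolutely convergent series
`c_v`, and each coefficient of `exp h` is a polynomial in finitely many coefficients of `h`.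
-/

open Filter

/-- The formal exponential `exp h = ∑_{m ≥ 0} h^m / m!` of a power series `h` with zero
constant term.  Since `h` has zero constant term, the coefficient of `t^k` only receives
contributions from `m ≤ k`. -/
noncomputable def pexp (h : PowerSeries ℂ) : PowerSeries ℂ :=
  PowerSeries.mk fun k =>
    ∑ m ∈ Finset.range (k + 1), ((Nat.factorial m : ℂ))⁻¹ * PowerSeries.coeff k (h ^ m)

open Topology
open scoped PowerSeries.WithPiTopology

namespace PowerSeries

section Field

variable {K : Type*} [Field K]

theorem eq_of_derivative_eq_mul_self [CharZero K] {u f g : K⟦X⟧}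
    (hf : d⁄dX K f = u * f) (hg : d⁄dX K g = u * g) (hg₀ : constantCoeff g ≠ 0)
    (h₀ : constantCoeff f = constantCoeff g) : f = g := by
  have hgg := PowerSeries.inv_mul_cancel g hg₀
  have hquot : f * g⁻¹ = 1 := by
    apply derivative.ext
    · rw [Derivation.leibniz, derivative_inv', hf, hg, derivative_one, smul_eq_mul, smul_eq_mul]
      linear_combination (-(f * u * g⁻¹)) * hgg
    · simp [constantCoeff_inv, h₀, hg₀]
  calc f = f * g⁻¹ * g := by rw [mul_assoc, hgg, mul_one]
    _ = g := by rw [hquot, one_mul]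

variable (K) in
noncomputable def logSeries : (ℕ → K) →ₗ[K] K⟦X⟧ where
  toFun c := mk fun v => if v = 0 then 0 else c v / v
  map_add' c c' := by
    ext v
    simp only [coeff_mk, Pi.add_apply, map_add]
    split_ifs <;> ring
  map_smul' a c := by
    ext v
    simp only [coeff_mk, Pi.smul_apply, smul_eq_mul, coeff_smul, RingHom.id_apply]
    split_ifs <;> ring

theorem coeff_logSeries (c : ℕ → K) (v : ℕ) :
    coeff v (logSeries K c) = if v = 0 then 0 else c v / v := by
  simp [logSeries]

theorem constantCoeff_logSeries (c : ℕ → K) : constantCoeff (logSeries K c) = 0 := by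
  simp [← coeff_zero_eq_constantCoeff_apply, coeff_logSeries]

theorem derivative_logSeries_pow [CharZero K] (a : K) :
    d⁄dX K (logSeries K (a ^ ·)) = C a * rescale a (mk 1) := by
  ext k
  rw [coeff_derivative, coeff_logSeries, if_neg k.succ_ne_zero, coeff_C_mul, coeff_rescale,
    coeff_mk, Pi.one_apply, mul_one]
  push_cast
  field_simp
  ring

theorem tendsto_logSeries [TopologicalSpace K] [ContinuousMul K] {ι : Type*} {l : Filter ι}
    {c : ι → ℕ → K} {c₀ : ℕ → K} (hc : ∀ v ≠ 0, Tendsto (c · v) l (𝓝 (c₀ v))) :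
    Tendsto (fun i => logSeries K (c i)) l (𝓝 (logSeries K c₀)) := by
  rw [WithPiTopology.tendsto_iff_coeff_tendsto]
  intro v
  simp only [coeff_logSeries]
  split_ifs with hv
  · exact tendsto_const_nhds
  · exact (hc v hv).div_const _

end Field
end PowerSeries

open PowerSeries

theorem coeff_pexp (h : ℂ⟦X⟧) (k : ℕ) :
    coeff k (pexp h) = ∑ m ∈ Finset.range (k + 1), ((m.factorial : ℂ))⁻¹ * coeff k (h ^ m) :=
  coeff_mk _ _

theorem constantCoeff_pexp (h : ℂ⟦X⟧) : constantCoeff (pexp h) = 1 := by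
  rw [← coeff_zero_eq_constantCoeff_apply, coeff_pexp]
  simp

theorem pexp_eq_subst_exp {h : ℂ⟦X⟧} (hh : constantCoeff h = 0) :
    pexp h = (exp ℂ).subst h := by
  ext k
  rw [coeff_subst' (HasSubst.of_constantCoeff_zero' hh), coeff_pexp,
    finsum_eq_sum_of_support_subset (s := Finset.range (k + 1))]
  · simp [coeff_exp]
  · refine Function.support_subset_iff'.2 fun m hm => ?_
    rw [coeff_of_lt_order k ?_, smul_zero]
    calc (k : ℕ∞) < m := by simpa using hm
      _ ≤ (h ^ m).order := le_order_pow_of_constantCoeff_eq_zero m hh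

theorem derivative_pexp {h : ℂ⟦X⟧} (hh : constantCoeff h = 0) :
    d⁄dX ℂ (pexp h) = d⁄dX ℂ h * pexp h := by
  rw [pexp_eq_subst_exp hh, derivative_subst (HasSubst.of_constantCoeff_zero' hh),
    derivative_exp, mul_comm]

theorem pexp_zero : pexp 0 = 1 :=
  eq_of_derivative_eq_mul_self (u := 0) (by rw [derivative_pexp (map_zero _), map_zero, zero_mul])
    (by rw [derivative_one, zero_mul]) (by simp) (by rw [constantCoeff_pexp, map_one])

theorem pexp_add {g h : ℂ⟦X⟧} (hg : constantCoeff g = 0) (hh : constantCoeff h = 0) :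
    pexp (g + h) = pexp g * pexp h := by
  refine eq_of_derivative_eq_mul_self (u := d⁄dX ℂ (g + h))
    (derivative_pexp (by rw [map_add, hg, hh, add_zero])) ?_ (by simp [constantCoeff_pexp])
    (by simp [constantCoeff_pexp])
  rw [Derivation.leibniz, derivative_pexp hg, derivative_pexp hh, map_add, smul_eq_mul,
    smul_eq_mul]
  ring

theorem pexp_neg {h : ℂ⟦X⟧} (hh : constantCoeff h = 0) : pexp (-h) = (pexp h)⁻¹ := by
  rw [PowerSeries.eq_inv_iff_mul_eq_one (by simp [constantCoeff_pexp]),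
    ← pexp_add (by rw [map_neg, hh, neg_zero]) hh, neg_add_cancel, pexp_zero]

theorem pexp_sum {ι : Type*} (s : Finset ι) (f : ι → ℂ⟦X⟧)
    (hf : ∀ i ∈ s, constantCoeff (f i) = 0) : pexp (∑ i ∈ s, f i) = ∏ i ∈ s, pexp (f i) := by
  classical
  induction s using Finset.induction_on with
  | empty => exact pexp_zero
  | insert a s ha ih =>
    rw [Finset.forall_mem_insert] at hf
    rw [Finset.sum_insert ha, Finset.prod_insert ha,
      pexp_add hf.1 (by simp [map_sum, Finset.sum_eq_zero hf.2]), ih hf.2]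

theorem continuous_pexp : Continuous pexp := by
  refine continuous_iff_continuousAt.2 fun h => ?_
  rw [ContinuousAt, WithPiTopology.tendsto_iff_coeff_tendsto]
  intro k
  simp only [coeff_pexp]
  refine tendsto_finsetSum _ fun m _ => (Tendsto.const_mul _ ?_)
  exact ((WithPiTopology.continuous_coeff ℂ k).comp (continuous_pow m)).continuousAt

theorem pexp_neg_logSeries_pow (a : ℂ) : pexp (-logSeries ℂ (a ^ ·)) = 1 - C a * X := by
  refine eq_of_derivative_eq_mul_self (derivative_pexp (by simp [constantCoeff_logSeries])) ?_
    (by simp) (by simp [constantCoeff_pexp])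
  have hgeom := congrArg (rescale a) (mk_one_mul_one_sub_eq_one ℂ)
  rw [map_mul, map_sub, map_one, rescale_X] at hgeom
  rw [map_neg, derivative_logSeries_pow, map_sub, derivative_one, Derivation.leibniz,
    derivative_X, derivative_C, smul_eq_mul, smul_eq_mul]
  linear_combination C a * hgeom

theorem prod_one_sub_C_mul_X {ι : Type*} (s : Finset ι) (a : ι → ℂ) :
    ∏ i ∈ s, (1 - C (a i) * X) = pexp (-logSeries ℂ fun v => ∑ i ∈ s, a i ^ v) := by
  have hsum : (fun v => ∑ i ∈ s, a i ^ v) = ∑ i ∈ s, (a i ^ ·) := by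
    ext v; rw [Finset.sum_apply]
  rw [hsum, map_sum, ← Finset.sum_neg_distrib,
    pexp_sum _ _ fun i _ => by rw [map_neg, constantCoeff_logSeries, neg_zero]]
  exact Finset.prod_congr rfl fun i _ => (pexp_neg_logSeries_pow (a i)).symm

theorem ite_even_inv_pexp_neg_logSeries (n : ℤ) (c : ℕ → ℂ) :
    (if Even n then (pexp (-logSeries ℂ c))⁻¹ else pexp (-logSeries ℂ c)) =
      pexp (logSeries ℂ fun v => (-1) ^ n * c v) := by
  have hsmul : logSeries ℂ (fun v => (-1 : ℂ) ^ n * c v) = (-1 : ℂ) ^ n • logSeries ℂ c := by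
    rw [← map_smul]
    rfl
  rw [hsmul]
  rcases n.even_or_odd with hn | hn
  · rw [if_pos hn, ← pexp_neg (by rw [map_neg, constantCoeff_logSeries, neg_zero]), neg_neg,
      hn.neg_one_zpow, one_smul]
  · rw [if_neg (Int.not_even_iff_odd.2 hn), hn.neg_one_zpow, neg_one_smul]

theorem prod_pexp_logSeries {ι : Type*} (s : Finset ι) (c : ι → ℕ → ℂ) :
    ∏ i ∈ s, pexp (logSeries ℂ (c i)) = pexp (logSeries ℂ fun v => ∑ i ∈ s, c i v) := by
  rw [← pexp_sum _ _ fun i _ => constantCoeff_logSeries _, ← map_sum]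
  congr 2
  ext v
  rw [Finset.sum_apply]

theorem prod_ite_even_inv_eq_pexp_logSeries (s : Finset ℤ) {κ : ℤ → Type*}
    [∀ n, Fintype (κ n)] (α : (n : ℤ) → κ n → ℂ) :
    ∏ n ∈ s, (if Even n then (∏ j, (1 - C (α n j) * X))⁻¹ else ∏ j, (1 - C (α n j) * X)) =
      pexp (logSeries ℂ fun v => ∑ n ∈ s, (-1) ^ n * ∑ j, α n j ^ v) := by
  simp_rw [prod_one_sub_C_mul_X, ite_even_inv_pexp_neg_logSeries, prod_pexp_logSeries]

theorem HasSum.tendsto_sum_Icc_sub_of_eq_zero {M : Type*} [AddCommMonoid M] [TopologicalSpace M]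
    {f : ℤ → M} {a : M} (hf : HasSum f a) {N₀ : ℤ} (hf₀ : ∀ n, N₀ < n → f n = 0) :
    Tendsto (fun N : ℕ => ∑ n ∈ Finset.Icc (N₀ - N) N₀, f n) atTop (𝓝 a) := by
  have hIcc : Tendsto (fun N : ℕ => Finset.Icc (N₀ - N) (N₀ + N)) atTop atTop :=
    tendsto_atTop_finset_of_monotone (fun _ _ h => Finset.Icc_subset_Icc (by omega) (by omega))
      fun n => ⟨(n - N₀).natAbs + (N₀ - n).natAbs, Finset.mem_Icc.2 (by omega)⟩
  refine (hf.comp hIcc).congr fun N =>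
    (Finset.sum_subset (Finset.Icc_subset_Icc_right (by omega)) fun n hn hn' => ?_).symm
  simp only [Finset.mem_Icc] at hn hn'
  exact hf₀ n (by omega)

theorem norm_sum_pow_le_sum_rpow {ι 𝕜 : Type*} [NormedField 𝕜] [Fintype ι] (a : ι → 𝕜) (v : ℕ) :
    ‖∑ i, a i ^ v‖ ≤ ∑ i, ‖a i‖ ^ (v : ℝ) := by
  simpa only [norm_pow, Real.rpow_natCast] using norm_sum_le Finset.univ (a · ^ v)

/-- Given finitely many complex numbers `α_{n,j}` for each `n ≤ N₀` with
`∑_{n,j} |α_{n,j}|^s < ∞` for all real `s > 0`: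
(1) for each `v ≥ 1` the series `c_v = ∑_n (-1)^n ∑_j α_{n,j}^v` converges absolutely;
(2) with `P_n(t) = ∏_j (1 - α_{n,j} t)`, the infinite product
`∏_{n ≤ N₀} P_n(t)^{(-1)^{n+1}}` (partial products over `N₀ - N ≤ n ≤ N₀`) converges
term by term in `ℂ[[t]]` to `exp (∑_{v ≥ 1} c_v t^v / v)`. -/
theorem infinite_product_L_series (N₀ : ℤ) (m : ℤ → ℕ) (hm : ∀ n : ℤ, N₀ < n → m n = 0)
    (α : (n : ℤ) → Fin (m n) → ℂ)
    (hconv : ∀ s : ℝ, 0 < s → Summable fun n : ℤ => ∑ j, ‖α n j‖ ^ s) :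
    (∀ v : ℕ, 1 ≤ v → Summable fun n : ℤ => ‖∑ j, α n j ^ v‖) ∧
    (∀ k : ℕ,
      Tendsto
        (fun N : ℕ => PowerSeries.coeff k
          (∏ n ∈ Finset.Icc (N₀ - N) N₀,
            if Even n then (∏ j, (1 - PowerSeries.C (α n j) * PowerSeries.X))⁻¹
            else ∏ j, (1 - PowerSeries.C (α n j) * PowerSeries.X)))
        atTop
        (nhds (PowerSeries.coeff k (pexp (PowerSeries.mk fun v =>
          if v = 0 then 0
          else (∑' n : ℤ, (-1 : ℂ) ^ n * ∑ j, α n j ^ v) / v))))) := by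
  have hbound (v : ℕ) (hv : v ≠ 0) : Summable fun n : ℤ => ∑ j, ‖α n j‖ ^ (v : ℝ) :=
    hconv v (by positivity)
  have hpow (v : ℕ) (hv : v ≠ 0) : Summable fun n : ℤ => (-1 : ℂ) ^ n * ∑ j, α n j ^ v :=
    (hbound v hv).of_norm_bounded fun n => by
      simpa using norm_sum_pow_le_sum_rpow (α n) v
  refine ⟨fun v hv => (hbound v (by omega)).of_nonneg_of_le (fun n => norm_nonneg _)
    fun n => norm_sum_pow_le_sum_rpow (α n) v, fun k => ?_⟩
  have hpartial := tendsto_logSeries fun v hv =>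
    (hpow v hv).hasSum.tendsto_sum_Icc_sub_of_eq_zero (N₀ := N₀) fun n hn => by
      have : IsEmpty (Fin (m n)) := by rw [hm n hn]; infer_instance
      simp
  simp_rw [prod_ite_even_inv_eq_pexp_logSeries]
  exact ((WithPiTopology.continuous_coeff ℂ k).tendsto _).comp
    ((continuous_pexp.tendsto _).comp hpartial)
end

section
/- Let q be a prime power and let f(t) = ∑_{k≥0} a_k t^k ∈ ℝ[[t]] be the term-by-term limit of the infinite product ∏_{n≥1} (1 − q^{−n} t)^{−1}. Then (1 − t) · f(qt) = f(t) in ℝ[[t]], where f(qt) denotes the rescaled series ∑_{k≥0} a_k q^k t^k. -/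
/-! Substituting `t ↦ q t` shifts the Euler factors, `(1 - q^{-(n+1)} t)⁻¹ ↦ (1 - q^{-n} t)⁻¹`,
so the rescaled partial product over `1, …, N + 1` is `(1 - t)⁻¹` times the partial product
over `1, …, N`. Term-by-term convergence is convergence in the product topology on `ℝ⟦X⟧`, for
which rescaling and multiplication are continuous, so the identity passes to the limit. -/

open Filter PowerSeries PowerSeries.WithPiTopology

namespace PowerSeries

section Rescale

variable {R : Type*} [CommSemiring R]

@[simp]
theorem constantCoeff_rescale (a : R) (f : R⟦X⟧) :
    constantCoeff (rescale a f) = constantCoeff f := by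
  rw [← coeff_zero_eq_constantCoeff_apply, coeff_rescale, pow_zero, one_mul,
    coeff_zero_eq_constantCoeff_apply]

@[simp]
theorem rescale_C (a c : R) : rescale a (C c) = C c := by
  ext n
  rw [coeff_rescale, coeff_C]
  split_ifs with hn
  · rw [hn, pow_zero, one_mul]
  · rw [mul_zero]

theorem continuous_rescale [TopologicalSpace R] [ContinuousMul R] (a : R) :
    Continuous (rescale a) :=
  continuous_iff_continuousAt.2 fun f =>
    (tendsto_iff_coeff_tendsto R _ _ _).2 fun n => by
      simpa only [coeff_rescale] using ((continuous_coeff R n).tendsto f).const_mul (a ^ n)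

theorem rescale_inv {K : Type*} [Field K] (a : K) (f : K⟦X⟧) :
    rescale a f⁻¹ = (rescale a f)⁻¹ := by
  by_cases hf : constantCoeff f = 0
  · rw [inv_eq_zero.2 hf, map_zero, eq_comm, inv_eq_zero, constantCoeff_rescale, hf]
  · rw [eq_inv_iff_mul_eq_one (by rwa [constantCoeff_rescale]), ← map_mul,
      PowerSeries.inv_mul_cancel f hf, map_one]

end Rescale

end PowerSeries

namespace ZetaBGm

variable {K : Type*} [Field K]

noncomputable def eulerFactor (q : K) (n : ℕ) : K⟦X⟧ :=
  (1 - C (q ^ n)⁻¹ * X)⁻¹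

theorem rescale_eulerFactor_succ {q : K} (hq : q ≠ 0) (n : ℕ) :
    rescale q (eulerFactor q (n + 1)) = eulerFactor q n := by
  have hcoeff : (q ^ (n + 1))⁻¹ * q = (q ^ n)⁻¹ := by
    rw [pow_succ, mul_inv, mul_assoc, inv_mul_cancel₀ hq, mul_one]
  rw [eulerFactor, eulerFactor, rescale_inv, map_sub, map_one, map_mul, rescale_C, rescale_X,
    ← mul_assoc, ← map_mul, hcoeff]

theorem rescale_prod_eulerFactor {q : K} (hq : q ≠ 0) (N : ℕ) :
    rescale q (∏ n ∈ Finset.Icc 1 (N + 1), eulerFactor q n) =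
      eulerFactor q 0 * ∏ n ∈ Finset.Icc 1 N, eulerFactor q n := by
  induction N with
  | zero => simp [rescale_eulerFactor_succ hq]
  | succ N ih =>
    rw [Finset.prod_Icc_succ_top (by omega), map_mul, ih, rescale_eulerFactor_succ hq,
      Finset.prod_Icc_succ_top (by omega), mul_assoc]

theorem one_sub_X_mul_rescale_prod_eulerFactor {q : K} (hq : q ≠ 0) (N : ℕ) :
    (1 - X) * rescale q (∏ n ∈ Finset.Icc 1 (N + 1), eulerFactor q n) =
      ∏ n ∈ Finset.Icc 1 N, eulerFactor q n := by
  have hX : (1 - X : K⟦X⟧) * eulerFactor q 0 = 1 := by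
    rw [eulerFactor, pow_zero, inv_one, map_one, one_mul]
    exact PowerSeries.mul_inv_cancel _ (by simp)
  rw [rescale_prod_eulerFactor hq, ← mul_assoc, hX, one_mul]

theorem one_sub_X_mul_rescale_eq_of_tendsto [TopologicalSpace K] [IsTopologicalSemiring K]
    [T2Space K] {q : K} (hq : q ≠ 0) {f : K⟦X⟧}
    (hf : Tendsto (fun N => ∏ n ∈ Finset.Icc 1 N, eulerFactor q n) atTop (nhds f)) :
    (1 - X) * rescale q f = f := by
  have hlim : Tendsto
      (fun N => (1 - X) * rescale q (∏ n ∈ Finset.Icc 1 (N + 1), eulerFactor q n))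
      atTop (nhds ((1 - X) * rescale q f)) :=
    (((continuous_rescale q).tendsto f).comp (hf.comp (tendsto_add_atTop_nat 1))).const_mul _
  simp only [one_sub_X_mul_rescale_prod_eulerFactor hq] at hlim
  exact tendsto_nhds_unique hlim hf

end ZetaBGm

/-- Let `q` be a prime power and let `f ∈ ℝ[[t]]` be the term-by-term limit of the
infinite product `∏_{n ≥ 1} (1 - q^{-n} t)⁻¹`, i.e. the zeta function `Z(B𝔾ₘ, t)`.
Then it satisfies the functional equation `(1 - t) · f(qt) = f(t)`. -/
theorem zeta_BGm_functional_equation (q : ℕ) (hq : IsPrimePow q) (f : PowerSeries ℝ)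
    (hf : ∀ k : ℕ,
      Tendsto
        (fun N : ℕ => PowerSeries.coeff k
          (∏ n ∈ Finset.Icc 1 N,
            (1 - PowerSeries.C (((q : ℝ) ^ n)⁻¹) * PowerSeries.X)⁻¹))
        atTop (nhds (PowerSeries.coeff k f))) :
    (1 - PowerSeries.X) * PowerSeries.rescale (q : ℝ) f = f :=
  ZetaBGm.one_sub_X_mul_rescale_eq_of_tendsto (Nat.cast_ne_zero.2 hq.ne_zero)
    ((tendsto_iff_coeff_tendsto ℝ _ _ _).2 hf)
end
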